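/- Let G = (V,E) be a finite connected vertex-transitive graph with diameter D ≥ 1, let f : V(G̃) → H be an injective map into a real Hilbert space H, and let f̄ be its symmetrization. Suppose β > 0 is such that for every i with 1 ≤ i ≤ D+1 there exists an edge (u,v) ∈ E with ‖f̄(u^{(i)}) − f̄(v^{(i)})‖ ≥ β. Then there exists a horizontal edge (x,y) of G̃ such that ‖f̄(x) − f̄(y)‖² / d_{G̃}(x,y)² ≥ ‖f̄(s) − f̄(t)‖² / d_{G̃}(s,t)² + β²/36. -/

import Mathlib

open scoped ENNReal

/-- Cost of a chain (list of vertices): sum of the length function over consecutive pairs. -/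
noncomputable def chainCost {α : Type} (len : α → α → ℝ≥0∞) : List α → ℝ≥0∞
  | a :: b :: l => len a b + chainCost len (b :: l)
  | _ => 0
  termination_by l => l.length

/-- A finite weighted multigraph with two distinguished vertices `s` and `t`.
Edge lengths take values in `ℝ≥0∞`. -/
structure STGraph where
  V : Type
  E : Type
  finV : Fintype V
  finE : Fintype E
  ends : E → V × V
  elen : E → ℝ≥0∞
  s : V
  t : V

attribute [instance] STGraph.finV STGraph.finE

namespace STGraph

/-- The length between two vertices: the infimum of lengths of edges joining them
(`⊤` if there is no such edge). -/
noncomputable def lenFn (G : STGraph) (u v : G.V) : ℝ≥0∞ :=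
  ⨅ e : {e : G.E // G.ends e = (u, v) ∨ G.ends e = (v, u)}, G.elen e.1

/-- The shortest-path (extended) distance between two vertices. -/
noncomputable def edist (G : STGraph) (u v : G.V) : ℝ≥0∞ :=
  ⨅ l : {l : List G.V // l.head? = some u ∧ l.getLast? = some v}, chainCost G.lenFn l.1

/-- `len G` is the distance between the two distinguished vertices. -/
noncomputable def len (G : STGraph) : ℝ≥0∞ := G.edist G.s G.t

/-- An `s`-`t` graph is *proper* if all edge lengths are positive and finite, there are no
self-loops, the graph is connected, and `s ≠ t`. -/
def Proper (G : STGraph) : Prop :=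
  (∀ e, 0 < G.elen e ∧ G.elen e < ⊤) ∧
  (∀ e, (G.ends e).1 ≠ (G.ends e).2) ∧
  (∀ u v, G.edist u v ≠ ⊤) ∧ G.s ≠ G.t

/-- The inner (non-terminal) vertices of an `s`-`t` graph. -/
abbrev Inner (G : STGraph) : Type := {v : G.V // v ≠ G.s ∧ v ≠ G.t}

noncomputable instance (G : STGraph) : Fintype G.Inner := Fintype.ofFinite _

/-- Where a vertex `w` of `G` lands in `H ⊘ G` when the copy of `G` is glued along edge `e` of
`H`: `s(G)` and `t(G)` are identified with the endpoints of `e`. -/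
noncomputable def endMap (H G : STGraph) (e : H.E) (w : G.V) : H.V ⊕ (H.E × G.Inner) := by
  classical
  exact if h : w = G.s then Sum.inl (H.ends e).1
    else if h' : w = G.t then Sum.inl (H.ends e).2
    else Sum.inr (e, ⟨w, h, h'⟩)

/-- The composition `H ⊘ G`: every edge of `H` is replaced by a copy of `G`, with lengths in the
copy along `e` scaled by `len_H(e)/len(G)`. -/
noncomputable def oslash (H G : STGraph) : STGraph where
  V := H.V ⊕ (H.E × G.Inner)
  E := H.E × G.E
  finV := inferInstance
  finE := inferInstance
  ends := fun p => (endMap H G p.1 (G.ends p.2).1, endMap H G p.1 (G.ends p.2).2)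
  elen := fun p => H.elen p.1 * G.elen p.2 / G.len
  s := Sum.inl H.s
  t := Sum.inl H.t

/-- A single edge of unit length. -/
noncomputable def unitEdge : STGraph where
  V := Bool
  E := Unit
  finV := inferInstance
  finE := inferInstance
  ends := fun _ => (false, true)
  elen := fun _ => 1
  s := false
  t := true

/-- Recursive composition: `G^{⊘0}` is a single unit-length edge and
`G^{⊘k} = G^{⊘(k-1)} ⊘ G`. -/
noncomputable def iterOslash (G : STGraph) : ℕ → STGraph
  | 0 => unitEdge
  | k + 1 => oslash (iterOslash G k) G

end STGraph
section Tilde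

open STGraph

/-- `D` is the diameter of the connected unweighted graph `G`. -/
def IsDiameter {V : Type} (G : SimpleGraph V) (D : ℕ) : Prop :=
  (∀ u v, G.dist u v ≤ D) ∧ ∃ u v, G.dist u v = D

/-- The vertex set of `G̃`: four special vertices `s = Sum.inl 0`, `s' = Sum.inl 1`,
`t' = Sum.inl 2`, `t = Sum.inl 3`, together with the layered vertices `v^{(i)}`. -/
abbrev TVert (V : Type) (D : ℕ) : Type := Fin 4 ⊕ (V × Fin (D + 1))

/-- The edge set of `G̃`: the two edges `(s,s'), (t',t)` of length `3D`; the edges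
`(s', v^{(1)})` and `(v^{(D+1)}, t')` of length `D`; the diagonal edges
`(u^{(i)}, v^{(i+1)})`; the vertical edges `(u^{(j)}, v^{(j)})` (one per unordered edge of
`G`, oriented increasingly); and the edges `(v^{(i)}, v^{(i+1)})`. -/
abbrev TEdge {V : Type} [LinearOrder V] (G : SimpleGraph V) (D : ℕ) : Type :=
  Fin 2 ⊕ ((V ⊕ V) ⊕ (({p : V × V // G.Adj p.1 p.2} × Fin D) ⊕
    (({p : V × V // G.Adj p.1 p.2 ∧ p.1 < p.2} × Fin (D + 1)) ⊕ (V × Fin D))))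

/-- The metric `s`-`t` graph `G̃` built from a finite connected unweighted graph `G`
with diameter `D` (the graph `𝐺⃗` of layers, plus tails `(s,s')`, `(t',t)` of length `3D`). -/
noncomputable def tildeG {V : Type} [Fintype V] [LinearOrder V] (G : SimpleGraph V)
    [DecidableRel G.Adj] (D : ℕ) : STGraph where
  V := TVert V D
  E := TEdge G D
  finV := inferInstance
  finE := inferInstance
  ends := fun e => match e with
    | Sum.inl i => if i = 0 then (Sum.inl 0, Sum.inl 1) else (Sum.inl 2, Sum.inl 3)
    | Sum.inr (Sum.inl (Sum.inl v)) => (Sum.inl 1, Sum.inr (v, 0))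
    | Sum.inr (Sum.inl (Sum.inr v)) => (Sum.inr (v, Fin.last D), Sum.inl 2)
    | Sum.inr (Sum.inr (Sum.inl (p, i))) =>
        (Sum.inr (p.1.1, i.castSucc), Sum.inr (p.1.2, i.succ))
    | Sum.inr (Sum.inr (Sum.inr (Sum.inl (q, j)))) => (Sum.inr (q.1.1, j), Sum.inr (q.1.2, j))
    | Sum.inr (Sum.inr (Sum.inr (Sum.inr (v, i)))) =>
        (Sum.inr (v, i.castSucc), Sum.inr (v, i.succ))
  elen := fun e => match e with
    | Sum.inl _ => 3 * (D : ℝ≥0∞)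
    | Sum.inr (Sum.inl _) => (D : ℝ≥0∞)
    | Sum.inr (Sum.inr _) => 1
  s := Sum.inl 0
  t := Sum.inl 3

/-- A horizontal edge of `G̃` is any edge which is not vertical. -/
def IsHorizontal {V : Type} [LinearOrder V] {G : SimpleGraph V} {D : ℕ} :
    TEdge G D → Prop
  | Sum.inr (Sum.inr (Sum.inr (Sum.inl _))) => False
  | _ => True

end Tilde
section Symmetry

/-- The automorphism group of a simple graph, as a subtype of permutations. -/
abbrev AutG {V : Type} (G : SimpleGraph V) : Type :=
  {π : Equiv.Perm V // ∀ a b, G.Adj (π a) (π b) ↔ G.Adj a b}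

noncomputable instance {V : Type} [Finite V] (G : SimpleGraph V) : Fintype (AutG G) :=
  Fintype.ofFinite _

/-- `G` is vertex-transitive. -/
def VertexTransitive {V : Type} (G : SimpleGraph V) : Prop :=
  ∀ u v : V, ∃ π : AutG G, π.1 u = v

/-- The automorphism `π̃` of `G̃` induced by an automorphism `π` of `G`: it fixes the four
special vertices and maps `v^{(i)}` to `π(v)^{(i)}`. -/
def tildeMap {V : Type} {D : ℕ} (π : Equiv.Perm V) : TVert V D → TVert V D
  | Sum.inl i => Sum.inl i
  | Sum.inr (v, i) => Sum.inr (π v, i)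

/-- The symmetrization `f̄(x) = |Aut(G)|^{-1/2} (f(π̃ x))_{π ∈ Aut(G)}` of a map
`f : V(G̃) → H`, taking values in `ℓ₂(Aut(G); H)`. -/
noncomputable def symHilb {V : Type} [Fintype V] [LinearOrder V] (G : SimpleGraph V) (D : ℕ)
    {H : Type} [NormedAddCommGroup H] [NormedSpace ℝ H] (f : TVert V D → H) :
    TVert V D → PiLp 2 (fun _ : AutG G => H) :=
  fun x => (WithLp.equiv 2 (∀ _ : AutG G, H)).symm
    (fun π => (Real.sqrt (Fintype.card (AutG G)))⁻¹ • f (tildeMap π.1 x))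

/-- The `p`-symmetrization `f̄(x) = |Aut(G)|^{-1/p} (f(π̃ x))_{π ∈ Aut(G)}` of a map
`f : V(G̃) → E`, taking values in the `p`-direct sum `ℓ_p(Aut(G); E)`. -/
noncomputable def symLp {V : Type} [Fintype V] [LinearOrder V] (G : SimpleGraph V) (D : ℕ)
    (p : ℝ) {E : Type} [NormedAddCommGroup E] [NormedSpace ℝ E] (f : TVert V D → E) :
    TVert V D → PiLp (ENNReal.ofReal p) (fun _ : AutG G => E) :=
  fun x => (WithLp.equiv (ENNReal.ofReal p) (∀ _ : AutG G, E)).symm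
    (fun π => ((Fintype.card (AutG G) : ℝ) ^ (-(1/p))) • f (tildeMap π.1 x))

end Symmetry


/-!
Suppose every horizontal edge of `G̃` has squared stretch below `T = (N / 9D)² + β² / 36`, where
`N = ‖f̄(s) − f̄(t)‖` and `d(s,t) = 9D`, and project onto the unit direction `u` of
`f̄(t) − f̄(s)`. The maps `π̃` act on `f̄` by permuting the coordinates of `ℓ₂(Aut(G); H)` and fix
`s` and `t`, so by vertex-transitivity `⟪f̄(·), u⟫` is constant on every layer and every `w^{(i)}`
has a neighbour `z^{(i)}` with `‖f̄(w^{(i)}) − f̄(z^{(i)})‖ ≥ β`. The column edge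
`w^{(i)} w^{(i+1)}` and the diagonal edge `w^{(i)} z^{(i+1)}` end at points with equal
`u`-components, so by the parallelogram law a column step advances by at most `√(T − β²/4)` along
`u`. Along the path `s, s', w^{(1)}, …, w^{(D+1)}, t', t` this gives
`N < 8D √T + D √(T − β²/4) ≤ 9D · N / 9D = N`, the last step by Cauchy–Schwarz.
-/

section ChainCost

variable {α : Type} (len : α → α → ℝ≥0∞)

@[simp]
theorem chainCost_singleton (a : α) : chainCost len [a] = 0 := by
  simp [chainCost]

@[simp]
theorem chainCost_cons_cons (a b : α) (l : List α) :
    chainCost len (a :: b :: l) = len a b + chainCost len (b :: l) := by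
  rw [chainCost]

theorem chainCost_append_le :
    ∀ (l : List α) {v : α} (t : List α), l.getLast? = some v →
      chainCost len (l ++ t) ≤ chainCost len l + chainCost len (v :: t)
  | [], _, _, h => by simp at h
  | [a], _, _, h => by
    obtain rfl : a = _ := by simpa using h
    simp
  | a :: b :: l, v, t, h => by
    rw [List.getLast?_cons_cons] at h
    simpa [add_assoc] using add_le_add (le_refl (len a b)) (chainCost_append_le (b :: l) t h)

end ChainCost

namespace STGraph

variable (G : STGraph)

theorem edist_le_chainCost {u v : G.V} (l : List G.V) (hu : l.head? = some u)
    (hv : l.getLast? = some v) : G.edist u v ≤ chainCost G.lenFn l :=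
  iInf_le_of_le ⟨l, hu, hv⟩ le_rfl

theorem edist_self_eq_zero (u : G.V) : G.edist u u = 0 :=
  nonpos_iff_eq_zero.1 <| by simpa using G.edist_le_chainCost [u] rfl rfl

theorem edist_le_elen (e : G.E) : G.edist (G.ends e).1 (G.ends e).2 ≤ G.elen e :=
  calc G.edist (G.ends e).1 (G.ends e).2
      ≤ chainCost G.lenFn [(G.ends e).1, (G.ends e).2] := G.edist_le_chainCost _ rfl rfl
    _ ≤ G.elen e := by
      simp only [chainCost_cons_cons, chainCost_singleton, add_zero, lenFn]
      exact iInf_le_of_le ⟨e, Or.inl rfl⟩ le_rfl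

theorem edist_triangle (u v w : G.V) : G.edist u w ≤ G.edist u v + G.edist v w := by
  simp only [edist, ENNReal.iInf_add, ENNReal.add_iInf]
  refine le_iInf₂ fun ⟨l₂, hv₂, hw⟩ ⟨l₁, hu, hv₁⟩ => ?_
  obtain ⟨t, rfl⟩ : ∃ t, l₂ = v :: t := by
    cases l₂ with
    | nil => simp at hv₂
    | cons x t => exact ⟨t, by simp_all⟩
  refine (G.edist_le_chainCost (l₁ ++ t) ?_ ?_).trans (chainCost_append_le _ l₁ t hv₁)
  · cases l₁ <;> simp_all
  · cases t with
    | nil => simp_all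
    | cons y t => rwa [List.getLast?_append_cons, ← List.getLast?_cons_cons (a := v)]

theorem le_add_edist (p : G.V → ℝ≥0∞)
    (hp : ∀ e, p (G.ends e).2 ≤ p (G.ends e).1 + G.elen e ∧
      p (G.ends e).1 ≤ p (G.ends e).2 + G.elen e) (u v : G.V) :
    p v ≤ p u + G.edist u v := by
  have hlen : ∀ a b, p b ≤ p a + G.lenFn a b := fun a b => by
    simp only [lenFn, ENNReal.add_iInf]
    refine le_iInf fun ⟨e, he⟩ => ?_
    rcases he with he | he
    · simpa [he] using (hp e).1
    · simpa [he] using (hp e).2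
  have hchain : ∀ (l : List G.V) a, l.head? = some a → l.getLast? = some v →
      p v ≤ p a + chainCost G.lenFn l := by
    intro l
    induction l with
    | nil => simp
    | cons a l ih =>
      intro a' ha hv
      obtain rfl : a = a' := by simpa using ha
      cases l with
      | nil => simp_all
      | cons b l =>
        rw [List.getLast?_cons_cons] at hv
        calc p v ≤ p b + chainCost G.lenFn (b :: l) := ih b rfl hv
          _ ≤ p a + chainCost G.lenFn (a :: b :: l) := by
            rw [chainCost_cons_cons, ← add_assoc]
            gcongr
            exact hlen a b
  simp only [edist, ENNReal.add_iInf]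
  exact le_iInf fun ⟨l, hu, hv⟩ => hchain l u hu hv

theorem le_edist_of_le_elen {c : ℝ≥0∞} (hc : ∀ e, c ≤ G.elen e) {u v : G.V} (huv : u ≠ v) :
    c ≤ G.edist u v := by
  classical
  simpa [huv.symm] using G.le_add_edist (fun x => if x = u then 0 else c)
    (fun e => ⟨by split_ifs <;> simp [hc e, le_add_left],
      by split_ifs <;> simp [hc e, le_add_left]⟩) u v

end STGraph

section Inequalities

open scoped RealInnerProductSpace

theorem Fin.sub_apply_zero_le_mul {n : ℕ} {F : Fin (n + 1) → ℝ} {r : ℝ}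
    (h : ∀ i : Fin n, F i.succ - F i.castSucc ≤ r) (k : Fin (n + 1)) :
    F k - F 0 ≤ k * r := by
  induction k using Fin.induction with
  | zero => simp
  | succ i ih =>
    have := h i
    simp only [Fin.val_succ, Fin.val_castSucc] at ih ⊢
    push_cast
    linarith

theorem lt_sqrt_mul_of_sq_div_sq_lt {n d l T : ℝ} (hn : 0 ≤ n) (hd : 0 < d) (hdl : d ≤ l)
    (h : n ^ 2 / d ^ 2 < T) : n < √T * l := by
  have : n / d < √T := (Real.lt_sqrt (by positivity)).2 (by rwa [div_pow])
  calc n = n / d * d := by field_simp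
    _ < √T * d := by gcongr
    _ ≤ √T * l := by gcongr

/-- Cauchy–Schwarz for the weights `(8, 1)`: `(8x + y)² ≤ 9 (8x² + y²)`. -/
theorem eight_mul_sqrt_add_sqrt_le {a b L : ℝ} (ha : 0 ≤ a) (hb : 0 ≤ b) (hL : 0 ≤ L)
    (h : 8 * a + b = 9 * L ^ 2) : 8 * √a + √b ≤ 9 * L := by
  refine le_of_pow_le_pow_left₀ two_ne_zero (by positivity) ?_
  nlinarith [sq_nonneg (√a - √b), Real.sq_sqrt ha, Real.sq_sqrt hb]

/-- `|⟪a - x, u⟫|` is at most the distance from `x` to the midpoint of `a` and `b`; conclude by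
the parallelogram law. -/
theorem sq_inner_sub_add_sq_div_four_le {F : Type} [NormedAddCommGroup F] [InnerProductSpace ℝ F]
    {u a b x : F} {β M : ℝ} (hu : ‖u‖ ≤ 1) (hab : ⟪a - b, u⟫ = 0) (hβ : 0 ≤ β)
    (hsep : β ≤ ‖a - b‖) (ha : ‖a - x‖ ≤ M) (hb : ‖b - x‖ ≤ M) :
    ⟪a - x, u⟫ ^ 2 + β ^ 2 / 4 ≤ M ^ 2 := by
  have hmid : ⟪(a - x) + (b - x), u⟫ = 2 * ⟪a - x, u⟫ := by
    have : ⟪b - x, u⟫ = ⟪a - x, u⟫ := by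
      rw [← sub_eq_zero, ← inner_sub_left, sub_sub_sub_cancel_right, ← neg_sub, inner_neg_left,
        hab, neg_zero]
    rw [inner_add_left, this, two_mul]
  have hproj : |2 * ⟪a - x, u⟫| ≤ ‖(a - x) + (b - x)‖ := by
    rw [← hmid]
    exact (abs_real_inner_le_norm _ _).trans (mul_le_of_le_one_right (norm_nonneg _) hu)
  have hpar := parallelogram_law_with_norm ℝ (a - x) (b - x)
  rw [sub_sub_sub_cancel_right] at hpar
  have hsq : (2 * ⟪a - x, u⟫) ^ 2 ≤ ‖(a - x) + (b - x)‖ ^ 2 := sq_le_sq' (abs_le.1 hproj).1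
    (abs_le.1 hproj).2
  nlinarith [norm_nonneg (a - x), norm_nonneg (b - x), mul_le_mul hsep hsep hβ (norm_nonneg _),
    mul_le_mul ha ha (norm_nonneg _) ((norm_nonneg _).trans ha),
    mul_le_mul hb hb (norm_nonneg _) ((norm_nonneg _).trans hb)]

end Inequalities

section Tilde

open STGraph

variable {V : Type} [Fintype V] [LinearOrder V] {G : SimpleGraph V} [DecidableRel G.Adj]
  {D : ℕ}

theorem tildeG_elen_ne_top (e : TEdge G D) : (tildeG G D).elen e ≠ ⊤ := by
  rcases e with _ | _ | _ <;> simp [tildeG, ENNReal.mul_ne_top]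

theorem tildeG_one_le_elen (hD : 1 ≤ D) (e : TEdge G D) : 1 ≤ (tildeG G D).elen e := by
  rcases e with _ | _ | _ <;> simp [tildeG] <;> exact_mod_cast (by omega)

theorem tildeG_ends_ne (e : TEdge G D) : ((tildeG G D).ends e).1 ≠ ((tildeG G D).ends e).2 := by
  rcases e with i | (_ | _) | _ | ⟨⟨p, hp⟩, j⟩ | _
  · fin_cases i <;> simp [tildeG]
  · simp [tildeG]
  · simp [tildeG]
  · simp only [tildeG]; simp [Fin.ext_iff]
  · simp only [tildeG]; simp [hp.2.ne]
  · simp only [tildeG]; simp [Fin.ext_iff]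

theorem tildeG_le_edist_s_t : 9 * (D : ℝ≥0∞) ≤ (tildeG G D).edist (Sum.inl 0) (Sum.inl 3) := by
  let p : TVert V D → ℕ := Sum.elim (fun i => 3 * D * i) (fun x => 4 * D + x.2)
  have hp : ∀ e, ((p ((tildeG G D).ends e).2 : ℕ) : ℝ≥0∞) ≤ p ((tildeG G D).ends e).1 +
      (tildeG G D).elen e ∧ ((p ((tildeG G D).ends e).1 : ℕ) : ℝ≥0∞) ≤
      p ((tildeG G D).ends e).2 + (tildeG G D).elen e := by
    intro e
    rcases e with i | (_ | _) | _ | _ | _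
    · fin_cases i <;> simp [tildeG, p]
      exact_mod_cast (by omega)
    all_goals simp [tildeG, p] <;> exact_mod_cast (by omega)
  calc 9 * (D : ℝ≥0∞) = p (Sum.inl 3) := by simp [p]; ring
    _ ≤ p (Sum.inl 0) + _ := (tildeG G D).le_add_edist (fun x => p x) hp _ _
    _ = _ := by simp [p]

theorem tildeG_edist_column (w : V) (i : Fin (D + 1)) :
    (tildeG G D).edist (Sum.inr (w, 0)) (Sum.inr (w, i)) ≤ i := by
  induction i using Fin.induction with
  | zero => simpa using ((tildeG G D).edist_self_eq_zero _).le
  | succ i ih =>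
    calc _ ≤ (tildeG G D).edist (Sum.inr (w, 0)) (Sum.inr (w, i.castSucc)) +
          (tildeG G D).edist (Sum.inr (w, i.castSucc)) (Sum.inr (w, i.succ)) :=
        edist_triangle _ _ _ _
      _ ≤ i + 1 := add_le_add (by simpa using ih)
          ((tildeG G D).edist_le_elen (Sum.inr (Sum.inr (Sum.inr (Sum.inr (w, i))))))
      _ = i.succ := by simp

theorem tildeG_edist_s_t_le [Nonempty V] :
    (tildeG G D).edist (Sum.inl 0) (Sum.inl 3) ≤ 9 * (D : ℝ≥0∞) := by
  obtain ⟨w⟩ := ‹Nonempty V›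
  set T := tildeG G D
  have hss' : T.edist (Sum.inl 0) (Sum.inl 1) ≤ 3 * D := T.edist_le_elen (Sum.inl 0)
  have hs'w : T.edist (Sum.inl 1) (Sum.inr (w, 0)) ≤ D :=
    T.edist_le_elen (Sum.inr (Sum.inl (Sum.inl w)))
  have hww : T.edist (Sum.inr (w, 0)) (Sum.inr (w, Fin.last D)) ≤ D := by
    simpa using tildeG_edist_column (G := G) w (Fin.last D)
  have hwt' : T.edist (Sum.inr (w, Fin.last D)) (Sum.inl 2) ≤ D :=
    T.edist_le_elen (Sum.inr (Sum.inl (Sum.inr w)))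
  have ht't : T.edist (Sum.inl 2) (Sum.inl 3) ≤ 3 * D := T.edist_le_elen (Sum.inl 1)
  calc T.edist (Sum.inl 0) (Sum.inl 3)
      ≤ T.edist (Sum.inl 0) (Sum.inl 1) + (T.edist (Sum.inl 1) (Sum.inr (w, 0)) +
          (T.edist (Sum.inr (w, 0)) (Sum.inr (w, Fin.last D)) +
            (T.edist (Sum.inr (w, Fin.last D)) (Sum.inl 2) +
              T.edist (Sum.inl 2) (Sum.inl 3)))) := by
        refine (T.edist_triangle _ (Sum.inl 1) _).trans (add_le_add le_rfl ?_)
        refine (T.edist_triangle _ (Sum.inr (w, 0)) _).trans (add_le_add le_rfl ?_)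
        refine (T.edist_triangle _ (Sum.inr (w, Fin.last D)) _).trans (add_le_add le_rfl ?_)
        exact T.edist_triangle _ _ _
    _ ≤ 3 * D + (D + (D + (D + 3 * D))) := by gcongr
    _ = 9 * D := by ring

theorem tildeG_edist_s_t [Nonempty V] :
    (tildeG G D).edist (Sum.inl 0) (Sum.inl 3) = 9 * (D : ℝ≥0∞) :=
  tildeG_edist_s_t_le.antisymm tildeG_le_edist_s_t

theorem tildeG_edist_ends_toReal_mem_Icc (hD : 1 ≤ D) (e : TEdge G D) :
    ((tildeG G D).edist ((tildeG G D).ends e).1 ((tildeG G D).ends e).2).toReal ∈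
      Set.Icc 1 ((tildeG G D).elen e).toReal := by
  have hle := (tildeG G D).edist_le_elen e
  refine ⟨?_, ENNReal.toReal_mono (tildeG_elen_ne_top e) hle⟩
  simpa using ENNReal.toReal_mono (ne_top_of_le_ne_top (tildeG_elen_ne_top e) hle)
    ((tildeG G D).le_edist_of_le_elen (tildeG_one_le_elen hD) (tildeG_ends_ne e))

end Tilde

section Symmetrization

open scoped RealInnerProductSpace

theorem tildeMap_tildeMap {V : Type} {D : ℕ} (σ π : Equiv.Perm V) (x : TVert V D) :
    tildeMap σ (tildeMap π x) = tildeMap (σ * π) x := by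
  rcases x with _ | _ <;> rfl

variable {V : Type} [Fintype V] [LinearOrder V] {G : SimpleGraph V} {D : ℕ}
  {H : Type} [NormedAddCommGroup H] [InnerProductSpace ℝ H]

def AutG.mulRight (π : AutG G) : AutG G ≃ AutG G where
  toFun σ := ⟨σ.1 * π.1, fun a b => (σ.2 _ _).trans (π.2 a b)⟩
  invFun σ := ⟨σ.1 * π.1⁻¹, fun a b =>
    (σ.2 _ _).trans (by simpa using (π.2 (π.1⁻¹ a) (π.1⁻¹ b)).symm)⟩
  left_inv σ := by ext : 1; simp [mul_assoc]
  right_inv σ := by ext : 1; simp [mul_assoc]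

theorem symHilb_tildeMap (f : TVert V D → H) (π : AutG G) (x : TVert V D) :
    symHilb G D f (tildeMap π.1 x) =
      LinearIsometryEquiv.piLpCongrLeft 2 ℝ H (AutG.mulRight π).symm (symHilb G D f x) := by
  ext σ
  simp [symHilb, Equiv.piCongrLeft', AutG.mulRight, tildeMap_tildeMap]

theorem norm_symHilb_tildeMap_sub (f : TVert V D → H) (π : AutG G) (x y : TVert V D) :
    ‖symHilb G D f (tildeMap π.1 x) - symHilb G D f (tildeMap π.1 y)‖ =
      ‖symHilb G D f x - symHilb G D f y‖ := by
  rw [symHilb_tildeMap, symHilb_tildeMap, ← map_sub, LinearIsometryEquiv.norm_map]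

theorem inner_symHilb_tildeMap_inl (f : TVert V D → H) (π : AutG G) (x : TVert V D)
    (k : Fin 4) :
    ⟪symHilb G D f (tildeMap π.1 x), symHilb G D f (Sum.inl k)⟫ =
      ⟪symHilb G D f x, symHilb G D f (Sum.inl k)⟫ := by
  have h := (LinearIsometryEquiv.piLpCongrLeft 2 ℝ H (AutG.mulRight π).symm).inner_map_map
    (symHilb G D f x) (symHilb G D f (Sum.inl k))
  rwa [← symHilb_tildeMap, ← symHilb_tildeMap] at h

namespace VertexTransitive

theorem inner_symHilb_layer_eq (htrans : VertexTransitive G) (f : TVert V D → H)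
    (i : Fin (D + 1)) (a b : V) :
    ⟪symHilb G D f (Sum.inr (a, i)), symHilb G D f (Sum.inl 3) - symHilb G D f (Sum.inl 0)⟫ =
      ⟪symHilb G D f (Sum.inr (b, i)), symHilb G D f (Sum.inl 3) - symHilb G D f (Sum.inl 0)⟫ := by
  obtain ⟨π, rfl⟩ := htrans a b
  change _ = ⟪symHilb G D f (tildeMap π.1 (Sum.inr (a, i))), _⟫
  simp only [inner_sub_right, inner_symHilb_tildeMap_inl]

theorem exists_adj_norm_symHilb_sub_eq (htrans : VertexTransitive G) (f : TVert V D → H)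
    {u v : V} (huv : G.Adj u v) (i : Fin (D + 1)) (w : V) :
    ∃ z, G.Adj w z ∧ ‖symHilb G D f (Sum.inr (w, i)) - symHilb G D f (Sum.inr (z, i))‖ =
      ‖symHilb G D f (Sum.inr (u, i)) - symHilb G D f (Sum.inr (v, i))‖ := by
  obtain ⟨π, rfl⟩ := htrans u w
  exact ⟨π.1 v, (π.2 u v).2 huv, norm_symHilb_tildeMap_sub f π (Sum.inr (u, i)) (Sum.inr (v, i))⟩

end VertexTransitive

end Symmetrization

section Stretch

open STGraph
open scoped RealInnerProductSpace

variable {V : Type} [Fintype V] [LinearOrder V] {G : SimpleGraph V} [DecidableRel G.Adj]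
  {D : ℕ} {F : Type} [NormedAddCommGroup F] [InnerProductSpace ℝ F] {β : ℝ}

theorem sq_inner_column_step_add_le {g : TVert V D → F} {u : F} {S : ℝ} (hu : ‖u‖ ≤ 1)
    (hlayer : ∀ i a b, ⟪g (Sum.inr (a, i)), u⟫ = ⟪g (Sum.inr (b, i)), u⟫) (hβ : 0 ≤ β)
    (hsep : ∀ i w, ∃ z, G.Adj w z ∧ β ≤ ‖g (Sum.inr (w, i)) - g (Sum.inr (z, i))‖)
    (hS : ∀ e : TEdge G D, IsHorizontal e →
      ‖g ((tildeG G D).ends e).1 - g ((tildeG G D).ends e).2‖ ≤ S * ((tildeG G D).elen e).toReal)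
    (w : V) (i : Fin D) :
    ⟪g (Sum.inr (w, i.succ)) - g (Sum.inr (w, i.castSucc)), u⟫ ^ 2 + β ^ 2 / 4 ≤ S ^ 2 := by
  obtain ⟨z, hz, hsepz⟩ := hsep i.succ w
  have hcolumn := hS (Sum.inr (Sum.inr (Sum.inr (Sum.inr (w, i))))) trivial
  have hdiagonal := hS (Sum.inr (Sum.inr (Sum.inl (⟨(w, z), hz⟩, i)))) trivial
  simp only [tildeG, ENNReal.toReal_one, mul_one] at hcolumn hdiagonal
  refine sq_inner_sub_add_sq_div_four_le hu ?_ hβ hsepz ?_ ?_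
  · rw [inner_sub_left, hlayer i.succ w z, sub_self]
  · rwa [norm_sub_rev]
  · rwa [norm_sub_rev]

theorem inner_tildeG_t_sub_s_lt [Nonempty V] {g : TVert V D → F} {u : F} {S : ℝ}
    (hu : ‖u‖ ≤ 1)
    (hlayer : ∀ i a b, ⟪g (Sum.inr (a, i)), u⟫ = ⟪g (Sum.inr (b, i)), u⟫) (hβ : 0 ≤ β)
    (hsep : ∀ i w, ∃ z, G.Adj w z ∧ β ≤ ‖g (Sum.inr (w, i)) - g (Sum.inr (z, i))‖)
    (hS : ∀ e : TEdge G D, IsHorizontal e →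
      ‖g ((tildeG G D).ends e).1 - g ((tildeG G D).ends e).2‖ < S * ((tildeG G D).elen e).toReal) :
    ⟪g (Sum.inl 3) - g (Sum.inl 0), u⟫ < D * (8 * S + √(S ^ 2 - β ^ 2 / 4)) := by
  obtain ⟨w⟩ := ‹Nonempty V›
  have hproj : ∀ e : TEdge G D, IsHorizontal e →
      ⟪g ((tildeG G D).ends e).2 - g ((tildeG G D).ends e).1, u⟫ <
        S * ((tildeG G D).elen e).toReal := fun e he =>
    calc _ ≤ ‖g ((tildeG G D).ends e).2 - g ((tildeG G D).ends e).1‖ :=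
          (real_inner_le_norm _ _).trans (mul_le_of_le_one_right (norm_nonneg _) hu)
      _ < _ := by rw [norm_sub_rev]; exact hS e he
  have hss' : ⟪g (Sum.inl 1) - g (Sum.inl 0), u⟫ < S * (3 * D) := by
    simpa [tildeG] using hproj (Sum.inl 0) trivial
  have hs'w : ⟪g (Sum.inr (w, 0)) - g (Sum.inl 1), u⟫ < S * D := by
    simpa [tildeG] using hproj (Sum.inr (Sum.inl (Sum.inl w))) trivial
  have hww : ⟪g (Sum.inr (w, Fin.last D)) - g (Sum.inr (w, 0)), u⟫ ≤
      D * √(S ^ 2 - β ^ 2 / 4) := by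
    simpa [inner_sub_left] using Fin.sub_apply_zero_le_mul (F := fun i => ⟪g (Sum.inr (w, i)), u⟫)
      (fun i => (le_abs_self _).trans <| Real.abs_le_sqrt <| by
        simpa [inner_sub_left] using le_sub_iff_add_le.2
          (sq_inner_column_step_add_le hu hlayer hβ hsep (fun e he => (hS e he).le) w i))
      (Fin.last D)
  have hwt' : ⟪g (Sum.inl 2) - g (Sum.inr (w, Fin.last D)), u⟫ < S * D := by
    simpa [tildeG] using hproj (Sum.inr (Sum.inl (Sum.inr w))) trivial
  have ht't : ⟪g (Sum.inl 3) - g (Sum.inl 2), u⟫ < S * (3 * D) := by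
    simpa [tildeG] using hproj (Sum.inl 1) trivial
  simp only [inner_sub_left] at hss' hs'w hww hwt' ht't ⊢
  linarith

theorem exists_isHorizontal_stretch_ge (hD : 1 ≤ D) [Nonempty V] (g : TVert V D → F)
    (hβ : 0 ≤ β)
    (hlayer : ∀ i a b, ⟪g (Sum.inr (a, i)), g (Sum.inl 3) - g (Sum.inl 0)⟫ =
      ⟪g (Sum.inr (b, i)), g (Sum.inl 3) - g (Sum.inl 0)⟫)
    (hsep : ∀ i w, ∃ z, G.Adj w z ∧ β ≤ ‖g (Sum.inr (w, i)) - g (Sum.inr (z, i))‖) :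
    ∃ e : TEdge G D, IsHorizontal e ∧
      ‖g (Sum.inl 0) - g (Sum.inl 3)‖ ^ 2 / (9 * D) ^ 2 + β ^ 2 / 36 ≤
        ‖g ((tildeG G D).ends e).1 - g ((tildeG G D).ends e).2‖ ^ 2 /
          ((tildeG G D).edist ((tildeG G D).ends e).1 ((tildeG G D).ends e).2).toReal ^ 2 := by
  by_contra! h
  set N := ‖g (Sum.inl 0) - g (Sum.inl 3)‖
  set T := N ^ 2 / (9 * D) ^ 2 + β ^ 2 / 36 with hT
  set v := g (Sum.inl 3) - g (Sum.inl 0)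
  have hS : ∀ e : TEdge G D, IsHorizontal e →
      ‖g ((tildeG G D).ends e).1 - g ((tildeG G D).ends e).2‖ < √T * ((tildeG G D).elen e).toReal :=
    fun e he => have hd := tildeG_edist_ends_toReal_mem_Icc hD e
      lt_sqrt_mul_of_sq_div_sq_lt (norm_nonneg _) (one_pos.trans_le hd.1) hd.2 (h e he)
  have hu : ‖‖v‖⁻¹ • v‖ ≤ 1 := by rw [norm_smul, norm_inv, norm_norm]; exact inv_mul_le_one
  have hvu : ⟪v, ‖v‖⁻¹ • v⟫ = N := by
    rw [real_inner_smul_right, real_inner_self_eq_norm_sq, sq, ← mul_assoc, inv_mul_mul_self,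
      norm_sub_rev]
  have hlayer' : ∀ i a b, ⟪g (Sum.inr (a, i)), ‖v‖⁻¹ • v⟫ = ⟪g (Sum.inr (b, i)), ‖v‖⁻¹ • v⟫ :=
    fun i a b => by rw [real_inner_smul_right, real_inner_smul_right, hlayer i a b]
  have hsqrtT : √T ^ 2 = T := Real.sq_sqrt (by positivity)
  have hstep := sq_inner_column_step_add_le hu hlayer' hβ hsep (fun e he => (hS e he).le)
    (Classical.arbitrary V) ⟨0, hD⟩
  rw [hsqrtT] at hstep
  have hsum : 8 * √T + √(T - β ^ 2 / 4) ≤ 9 * (N / (9 * D)) :=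
    eight_mul_sqrt_add_sqrt_le (by positivity)
      (sub_nonneg.2 ((le_add_of_nonneg_left (sq_nonneg _)).trans hstep)) (by positivity)
      (by rw [hT]; field_simp; ring)
  have hlt := inner_tildeG_t_sub_s_lt hu hlayer' hβ hsep hS
  rw [hvu, hsqrtT] at hlt
  have : (D : ℝ) * (8 * √T + √(T - β ^ 2 / 4)) ≤ N :=
    calc _ ≤ (D : ℝ) * (9 * (N / (9 * D))) := by gcongr
      _ = N := by field_simp
  linarith

end Stretch

open STGraph in
theorem stretch_lemma_general {V : Type} [Fintype V] [LinearOrder V] (G : SimpleGraph V)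
    [DecidableRel G.Adj] (D : ℕ) (hD : 1 ≤ D)
    (htrans : VertexTransitive G)
    (H : Type) [NormedAddCommGroup H] [InnerProductSpace ℝ H]
    (f : TVert V D → H) (β : ℝ) (hβ : 0 < β)
    (hvert : ∀ i : Fin (D + 1), ∃ u v : V, G.Adj u v ∧
      β ≤ ‖symHilb G D f (Sum.inr (u, i)) - symHilb G D f (Sum.inr (v, i))‖) :
    ∃ e : TEdge G D, IsHorizontal e ∧
      ‖symHilb G D f (Sum.inl 0) - symHilb G D f (Sum.inl 3)‖ ^ 2 /
          (((tildeG G D).edist (Sum.inl 0) (Sum.inl 3)).toReal) ^ 2 + β ^ 2 / 36 ≤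
        ‖symHilb G D f ((tildeG G D).ends e).1 - symHilb G D f ((tildeG G D).ends e).2‖ ^ 2 /
          (((tildeG G D).edist ((tildeG G D).ends e).1 ((tildeG G D).ends e).2).toReal) ^ 2 := by
  obtain ⟨w, -⟩ := hvert 0
  have : Nonempty V := ⟨w⟩
  rw [tildeG_edist_s_t, ENNReal.toReal_mul, ENNReal.toReal_natCast]
  refine exists_isHorizontal_stretch_ge hD (symHilb G D f) hβ.le
    (htrans.inner_symHilb_layer_eq f) fun i w => ?_
  obtain ⟨u, v, huv, hsep⟩ := hvert i
  obtain ⟨z, hz, heq⟩ := htrans.exists_adj_norm_symHilb_sub_eq f huv i w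
  exact ⟨z, hz, heq ▸ hsep⟩

open STGraph in
/-- Stretch lemma: let `G` be vertex-transitive with diameter `D ≥ 1`, `f : V(G̃) → H` an
injective map into a real Hilbert space and `f̄` its symmetrization.  If for every layer
`i ∈ [D+1]` there is an edge `(u,v)` of `G` with `‖f̄(u^{(i)}) − f̄(v^{(i)})‖ ≥ β`, then some
horizontal edge `(x,y)` of `G̃` satisfies
`‖f̄(x) − f̄(y)‖²/d(x,y)² ≥ ‖f̄(s) − f̄(t)‖²/d(s,t)² + β²/36`. -/
theorem stretch_lemma {V : Type} [Fintype V] [LinearOrder V] (G : SimpleGraph V)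
    [DecidableRel G.Adj] (hconn : G.Connected) (D : ℕ) (hD : 1 ≤ D)
    (hdiam : IsDiameter G D) (htrans : VertexTransitive G)
    (H : Type) [NormedAddCommGroup H] [InnerProductSpace ℝ H] [CompleteSpace H]
    (f : TVert V D → H) (hf : Function.Injective f) (β : ℝ) (hβ : 0 < β)
    (hvert : ∀ i : Fin (D + 1), ∃ u v : V, G.Adj u v ∧
      β ≤ ‖symHilb G D f (Sum.inr (u, i)) - symHilb G D f (Sum.inr (v, i))‖) :
    ∃ e : TEdge G D, IsHorizontal e ∧
      ‖symHilb G D f (Sum.inl 0) - symHilb G D f (Sum.inl 3)‖ ^ 2 /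
          (((tildeG G D).edist (Sum.inl 0) (Sum.inl 3)).toReal) ^ 2 + β ^ 2 / 36 ≤
        ‖symHilb G D f ((tildeG G D).ends e).1 - symHilb G D f ((tildeG G D).ends e).2‖ ^ 2 /
          (((tildeG G D).edist ((tildeG G D).ends e).1 ((tildeG G D).ends e).2).toReal) ^ 2 :=
  stretch_lemma_general G D hD htrans H f β hβ hvert
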